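/- Let G be a connected ribbon graph with initial data (v,e), a vertex v and incident edge e. For every spanning tree T, the Bernardi tour τ_{(v,e)}(T) traverses each edge of T exactly twice (once in each direction) and cuts through each edge not in T exactly twice, and the associated divisor β_{(v,e)}(T) is a T-break divisor. -/

import Mathlib

/-- A finite multigraph: vertices, edges, and an (arbitrarily oriented)
pair of endpoints for each edge. -/
structure Multigraph where
  V : Type
  E : Type
  [fV : Fintype V]
  [fE : Fintype E]
  [dV : DecidableEq V]
  [dE : DecidableEq E]
  ends : E → V × V

attribute [instance] Multigraph.fV Multigraph.fE Multigraph.dV Multigraph.dE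

namespace Multigraph

variable (G : Multigraph)

/-- No loop edges. -/
def Loopless : Prop := ∀ e : G.E, (G.ends e).1 ≠ (G.ends e).2

/-- Adjacency via some edge. -/
def Adj (x y : G.V) : Prop := ∃ e : G.E, G.ends e = (x, y) ∨ G.ends e = (y, x)

/-- The multigraph is connected. -/
def Connected : Prop := Nonempty G.V ∧ ∀ x y : G.V, Relation.ReflTransGen G.Adj x y

/-- The degree of a divisor (a divisor is a function `V → ℤ`). -/
def deg (D : G.V → ℤ) : ℤ := ∑ v, D v

/-- The Laplacian divisor `Δ f` of `f : V → ℤ`. -/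
def lap (f : G.V → ℤ) : G.V → ℤ := fun v =>
  ∑ e : G.E, ((if (G.ends e).1 = v then f v - f (G.ends e).2 else 0) +
              (if (G.ends e).2 = v then f v - f (G.ends e).1 else 0))

/-- Linear equivalence of divisors. -/
def LinEquiv (D D' : G.V → ℤ) : Prop := ∃ f : G.V → ℤ, D - D' = G.lap f

/-- `x` and `y` are connected using only edges from `S`. -/
def ConnectsVia (S : Finset G.E) (x y : G.V) : Prop :=
  Relation.ReflTransGen
    (fun a b => ∃ e ∈ S, G.ends e = (a, b) ∨ G.ends e = (b, a)) x y

/-- A spanning tree, as an edge set: it connects all vertices and has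
`#V - 1` edges. -/
def IsSpanningTree (T : Finset G.E) : Prop :=
  (∀ x y : G.V, G.ConnectsVia T x y) ∧ T.card + 1 = Fintype.card G.V

/-- `D` is a `T`-break divisor: one chip on an endpoint of each edge outside `T`. -/
def IsTBreak (T : Finset G.E) (D : G.V → ℤ) : Prop :=
  ∃ ch : G.E → G.V,
    (∀ e ∉ T, ch e = (G.ends e).1 ∨ ch e = (G.ends e).2) ∧
    ∀ v, D v = ((Finset.univ.filter (fun e => e ∉ T ∧ ch e = v)).card : ℤ)

/-- `D` is a break divisor. -/
def IsBreak (D : G.V → ℤ) : Prop := ∃ T, G.IsSpanningTree T ∧ G.IsTBreak T D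

/-- The genus `#E - #V + 1`. -/
def genus : ℤ := (Fintype.card G.E : ℤ) - Fintype.card G.V + 1

end Multigraph

namespace Multigraph

variable (G : Multigraph)

/-- A dart (half-edge / directed edge): an edge with a direction. -/
abbrev Dart := G.E × Bool

/-- The tail (initial vertex) of a dart. -/
def dtail (d : G.Dart) : G.V := if d.2 then (G.ends d.1).1 else (G.ends d.1).2

/-- The head (terminal vertex) of a dart. -/
def dhead (d : G.Dart) : G.V := if d.2 then (G.ends d.1).2 else (G.ends d.1).1

/-- Reversing a dart. -/
def flipPerm : Equiv.Perm G.Dart :=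
  Function.Involutive.toPerm (fun d => (d.1, !d.2)) (by intro d; simp)

end Multigraph

/-- A ribbon graph: a multigraph together with a cyclic ordering of the darts
around each vertex, encoded as a permutation `next` of the darts whose cycles
are exactly the fibers of the tail map. -/
structure RibbonGraph extends Multigraph where
  next : Equiv.Perm (E × Bool)
  cyclic : ∀ d d' : E × Bool,
    toMultigraph.dtail d = toMultigraph.dtail d' ↔ next.SameCycle d d'

namespace RibbonGraph

variable (R : RibbonGraph)

/-- One step of the Bernardi tour with respect to a spanning tree `T`:
walk along tree edges, cut through non-tree edges. -/
def bernardiStep (T : Finset R.toMultigraph.E) (d : R.toMultigraph.Dart) :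
    R.toMultigraph.Dart :=
  if d.1 ∈ T then R.next (R.toMultigraph.flipPerm d) else R.next d

/-- The Bernardi tour: the sequence of darts considered by the Bernardi
process started at the dart `d0`. -/
def bernardiTour (T : Finset R.toMultigraph.E) (d0 : R.toMultigraph.Dart)
    (n : ℕ) : R.toMultigraph.Dart :=
  (R.bernardiStep T)^[n] d0

open scoped Classical in
/-- The Bernardi divisor `β_{(v,e)}(T)`: a chip is dropped at the current
vertex each time the tour first cuts through an edge not in `T`. -/
noncomputable def bernardiDiv (T : Finset R.toMultigraph.E)
    (d0 : R.toMultigraph.Dart) : R.toMultigraph.V → ℤ := fun v =>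
  ((Finset.univ.filter (fun e : R.toMultigraph.E => e ∉ T ∧
      ∃ i : ℕ, (R.bernardiTour T d0 i).1 = e ∧
        R.toMultigraph.dtail (R.bernardiTour T d0 i) = v ∧
        ∀ j < i, (R.bernardiTour T d0 j).1 ≠ e)).card : ℤ)

/-- The face permutation of a ribbon graph. -/
def facePerm : Equiv.Perm (R.toMultigraph.Dart) := R.next * R.toMultigraph.flipPerm

/-- Darts belonging to the same face. -/
def faceSetoid : Setoid (R.toMultigraph.Dart) :=
  ⟨R.facePerm.SameCycle,
    ⟨fun _ => Equiv.Perm.SameCycle.refl _ _, fun h => h.symm, fun h h' => h.trans h'⟩⟩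

/-- The number of faces of a ribbon graph. -/
noncomputable def numFaces : ℕ := Nat.card (Quotient R.faceSetoid)

/-- A ribbon graph is planar iff Euler's formula `#V - #E + #F = 2` holds,
i.e. its topological genus is zero. -/
def Planar : Prop :=
  (Fintype.card R.toMultigraph.V : ℤ) - Fintype.card R.toMultigraph.E + R.numFaces = 2

end RibbonGraph

/-!
The Bernardi step is the permutation `next * treeFlip T` of the darts, where `treeFlip T` reverses
the darts of tree edges. Its cycle through `d0` is closed under reversing tree darts: deleting a
tree edge `e` splits the vertices into two sides, and a closed tour crosses `e` from one side to
the other as often as back. Being also closed under `next`, the cycle contains every dart at the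
tail of one of its darts, so by connectivity of `T` it contains all `2 · #E` darts. The first time
the tour cuts a non-tree edge it stands at an endpoint of that edge, which gives the `T`-break
divisor.
-/

namespace Multigraph

variable {G : Multigraph}

theorem ConnectsVia.symm {S : Finset G.E} {x y : G.V} (h : G.ConnectsVia S x y) :
    G.ConnectsVia S y x := by
  induction h with
  | refl => exact .refl
  | tail _ hbc ih =>
    obtain ⟨e, he, hends⟩ := hbc
    exact .head ⟨e, he, hends.symm⟩ ih

theorem ConnectsVia.of_forall_mem {S S' : Finset G.E}
    (hS : ∀ e ∈ S, G.ConnectsVia S' (G.ends e).1 (G.ends e).2) {x y : G.V}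
    (h : G.ConnectsVia S x y) : G.ConnectsVia S' x y := by
  induction h with
  | refl => exact .refl
  | tail _ hbc ih =>
    obtain ⟨e, he, hends⟩ := hbc
    have hconn := hS e he
    rcases hends with hends | hends <;> rw [hends] at hconn
    · exact ih.trans hconn
    · exact ih.trans hconn.symm

def toSimpleGraph (S : Finset G.E) : SimpleGraph G.V :=
  SimpleGraph.fromEdgeSet ((fun e => s((G.ends e).1, (G.ends e).2)) '' S)

theorem ConnectsVia.reachable {S : Finset G.E} {x y : G.V} (h : G.ConnectsVia S x y) :
    (G.toSimpleGraph S).Reachable x y := by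
  induction h with
  | refl => rfl
  | @tail b c _ hbc ih =>
    obtain ⟨e, he, hends⟩ := hbc
    by_cases hbc : b = c
    · exact hbc ▸ ih
    refine ih.trans (SimpleGraph.Adj.reachable ?_)
    rw [toSimpleGraph, SimpleGraph.fromEdgeSet_adj]
    refine ⟨⟨e, he, ?_⟩, hbc⟩
    rcases hends with h | h <;> simp [h, Sym2.eq_swap]

theorem card_le_card_add_one_of_connectsVia {S : Finset G.E}
    (h : ∀ x y : G.V, G.ConnectsVia S x y) : Fintype.card G.V ≤ S.card + 1 := by
  cases isEmpty_or_nonempty G.V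
  · simp
  have hconn : (G.toSimpleGraph S).Connected :=
    (SimpleGraph.connected_iff _).2 ⟨fun x y => (h x y).reachable, inferInstance⟩
  have hedges : Nat.card (G.toSimpleGraph S).edgeSet ≤ S.card := by
    rw [Nat.card_coe_set_eq, ← Set.ncard_coe_finset]
    calc (G.toSimpleGraph S).edgeSet.ncard
        ≤ ((fun e => s((G.ends e).1, (G.ends e).2)) '' (S : Set G.E)).ncard :=
          Set.ncard_le_ncard (by simp [toSimpleGraph]) (Set.toFinite _)
      _ ≤ (S : Set G.E).ncard := Set.ncard_image_le (Set.toFinite _)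
  have := hconn.card_vert_le_card_edgeSet_add_one
  rw [Nat.card_eq_fintype_card] at this
  omega

theorem IsSpanningTree.not_connectsVia_erase {T : Finset G.E} (hT : G.IsSpanningTree T)
    {e : G.E} (he : e ∈ T) : ¬ G.ConnectsVia (T.erase e) (G.ends e).1 (G.ends e).2 := by
  intro h
  have hall : ∀ x y, G.ConnectsVia (T.erase e) x y := fun x y =>
    (hT.1 x y).of_forall_mem fun f hf =>
      if hfe : f = e then hfe ▸ h
      else .single ⟨f, Finset.mem_erase.2 ⟨hfe, hf⟩, .inl rfl⟩
  have hcard := card_le_card_add_one_of_connectsVia hall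
  rw [Finset.card_erase_of_mem he] at hcard
  have := hT.2
  have := Finset.card_pos.2 ⟨e, he⟩
  omega

theorem flipPerm_apply (d : G.Dart) : G.flipPerm d = (d.1, !d.2) :=
  rfl

theorem dtail_or (d : G.Dart) :
    G.dtail d = (G.ends d.1).1 ∨ G.dtail d = (G.ends d.1).2 := by
  obtain ⟨e, b⟩ := d; cases b <;> simp [dtail]

theorem dtail_flip (d : G.Dart) : G.dtail (d.1, !d.2) = G.dhead d := by
  obtain ⟨e, b⟩ := d; cases b <;> simp [dtail, dhead]

theorem ConnectsVia.connectsVia_iff_left {S : Finset G.E} {x y : G.V} (h : G.ConnectsVia S x y)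
    (z : G.V) : G.ConnectsVia S x z ↔ G.ConnectsVia S y z :=
  ⟨h.symm.trans, h.trans⟩

theorem connectsVia_dtail_dhead {S : Finset G.E} {d : G.Dart} (hd : d.1 ∈ S) :
    G.ConnectsVia S (G.dtail d) (G.dhead d) := by
  obtain ⟨e, b⟩ := d
  refine .single ⟨e, hd, ?_⟩
  cases b <;> simp [dtail, dhead]

theorem exists_dart_of_ends {e : G.E} {a b : G.V}
    (h : G.ends e = (a, b) ∨ G.ends e = (b, a)) :
    ∃ d : G.Dart, d.1 = e ∧ G.dtail d = a ∧ G.dhead d = b := by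
  rcases h with h | h
  · exact ⟨(e, true), rfl, by simp [dtail, h], by simp [dhead, h]⟩
  · exact ⟨(e, false), rfl, by simp [dtail, h], by simp [dhead, h]⟩

end Multigraph

theorem Equiv.Perm.sum_sameCycle_apply_sub {α M : Type*} [Fintype α] [AddCommGroup M]
    (σ : Equiv.Perm α) [DecidableRel σ.SameCycle] (a : α) (f : α → M) :
    ∑ x ∈ Finset.univ.filter (σ.SameCycle a), (f (σ x) - f x) = 0 := by
  rw [Finset.sum_sub_distrib, sub_eq_zero]
  exact Finset.sum_equiv σ (by simp [Equiv.Perm.sameCycle_apply_right]) (fun _ _ => rfl)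

theorem Equiv.Perm.bijective_pow_apply_of_forall_sameCycle {α : Type*} [Fintype α]
    {σ : Equiv.Perm α} (hσ : ∀ x y, σ.SameCycle x y) (a : α) :
    Function.Bijective fun i : Fin (Fintype.card α) => (σ ^ (i : ℕ)) a := by
  have hcyc : σ.IsCycleOn (Finset.univ : Finset α) :=
    ⟨by simp, fun x _ y _ => hσ x y⟩
  refine (Fintype.bijective_iff_surjective_and_card _).2 ⟨fun b => ?_, Fintype.card_fin _⟩
  obtain ⟨n, hn, hb⟩ := hcyc.exists_pow_eq (Finset.mem_univ a) (Finset.mem_univ b)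
  exact ⟨⟨n, hn⟩, hb⟩

namespace RibbonGraph

section

variable (R : RibbonGraph)

def treeFlip (T : Finset R.E) : Equiv.Perm R.Dart :=
  Function.Involutive.toPerm (fun d => if d.1 ∈ T then (d.1, !d.2) else d)
    (by intro ⟨e, b⟩; by_cases h : e ∈ T <;> simp [h])

theorem treeFlip_apply (T : Finset R.E) (d : R.Dart) :
    R.treeFlip T d = if d.1 ∈ T then (d.1, !d.2) else d :=
  rfl

def stepPerm (T : Finset R.E) : Equiv.Perm R.Dart := R.next * R.treeFlip T

variable {R}

theorem bernardiTour_eq_pow_apply (T : Finset R.E) (d0 : R.Dart) (n : ℕ) :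
    R.bernardiTour T d0 n = (R.stepPerm T ^ n) d0 := by
  have : R.bernardiStep T = R.stepPerm T := by
    funext d
    by_cases h : d.1 ∈ T <;>
      simp [bernardiStep, stepPerm, treeFlip_apply, h, Multigraph.flipPerm_apply]
  rw [bernardiTour, this, Equiv.Perm.iterate_eq_pow]

theorem stepPerm_apply_of_mem {T : Finset R.E} {d : R.Dart} (hd : d.1 ∈ T) :
    R.stepPerm T d = R.next (d.1, !d.2) := by
  simp [stepPerm, treeFlip_apply, hd]

theorem stepPerm_apply_of_notMem {T : Finset R.E} {d : R.Dart} (hd : d.1 ∉ T) :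
    R.stepPerm T d = R.next d := by
  simp [stepPerm, treeFlip_apply, hd]

theorem dtail_next (d : R.Dart) : R.dtail (R.next d) = R.dtail d :=
  ((R.cyclic d (R.next d)).2 ⟨1, by simp⟩).symm

theorem dtail_stepPerm (T : Finset R.E) (d : R.Dart) :
    R.dtail (R.stepPerm T d) = if d.1 ∈ T then R.dhead d else R.dtail d := by
  by_cases hd : d.1 ∈ T
  · rw [stepPerm_apply_of_mem hd, dtail_next, if_pos hd, Multigraph.dtail_flip]
  · rw [stepPerm_apply_of_notMem hd, dtail_next, if_neg hd]

/-- Let `χ` be the indicator of the side of `(ends e).1` in `T - e`. Along the tour, `χ ∘ dtail`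
only changes when the tour walks along `e`: by `+1` at `(e, false)` and by `-1` at `(e, true)`.
Summed over a cycle of the tour these changes cancel. -/
theorem sameCycle_stepPerm_flip_iff {T : Finset R.E} (hT : R.IsSpanningTree T) {e : R.E}
    (he : e ∈ T) (d0 : R.Dart) (b : Bool) :
    (R.stepPerm T).SameCycle d0 (e, !b) ↔ (R.stepPerm T).SameCycle d0 (e, b) := by
  classical
  let χ : R.V → ℤ := fun u => if R.ConnectsVia (T.erase e) u (R.ends e).1 then 1 else 0
  have hχ : ∀ d : R.Dart, χ (R.dtail (R.stepPerm T d)) - χ (R.dtail d) =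
      (if d = (e, false) then 1 else 0) - (if d = (e, true) then 1 else 0) := by
    have h1 : χ (R.ends e).1 = 1 := if_pos .refl
    have h2 : χ (R.ends e).2 = 0 := if_neg fun h => hT.not_connectsVia_erase he h.symm
    intro d
    rw [dtail_stepPerm]
    by_cases hde : d.1 = e
    · obtain ⟨f, c⟩ := d
      obtain rfl : f = e := hde
      cases c <;> simp [he, Multigraph.dtail, Multigraph.dhead, h1, h2]
    have hne : ∀ c, d ≠ (e, c) := fun c h => hde (by rw [h])
    rw [if_neg (hne false), if_neg (hne true)]
    split_ifs with hdT
    · have hside := (Multigraph.connectsVia_dtail_dhead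
        (Finset.mem_erase.2 ⟨hde, hdT⟩)).connectsVia_iff_left (R.ends e).1
      simp only [χ, hside, sub_self]
    · exact sub_self _
  have hsum := (R.stepPerm T).sum_sameCycle_apply_sub d0 (fun d => χ (R.dtail d))
  simp only [hχ, Finset.sum_sub_distrib, Finset.sum_ite_eq', Finset.mem_filter,
    Finset.mem_univ, true_and] at hsum
  cases b <;> split_ifs at hsum <;> simp_all

theorem sameCycle_next {T : Finset R.E} (hT : R.IsSpanningTree T) {d0 d : R.Dart}
    (h : (R.stepPerm T).SameCycle d0 d) : (R.stepPerm T).SameCycle d0 (R.next d) := by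
  by_cases hd : d.1 ∈ T
  · have hnext : R.next d = R.stepPerm T (d.1, !d.2) := by
      rw [stepPerm_apply_of_mem (d := (d.1, !d.2)) hd, Bool.not_not]
    rw [hnext, Equiv.Perm.sameCycle_apply_right]
    exact (sameCycle_stepPerm_flip_iff hT hd d0 d.2).2 h
  · rwa [← stepPerm_apply_of_notMem hd, Equiv.Perm.sameCycle_apply_right]

theorem sameCycle_of_dtail_eq {T : Finset R.E} (hT : R.IsSpanningTree T) {d0 d d' : R.Dart}
    (h : (R.stepPerm T).SameCycle d0 d) (hdd' : R.dtail d = R.dtail d') :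
    (R.stepPerm T).SameCycle d0 d' := by
  obtain ⟨k, -, rfl⟩ := ((R.cyclic d d').1 hdd').exists_pow_eq'
  clear hdd'
  induction k with
  | zero => exact h
  | succ k ih => rw [pow_succ', Equiv.Perm.mul_apply]; exact sameCycle_next hT ih

theorem sameCycle_stepPerm {T : Finset R.E} (hT : R.IsSpanningTree T) (d0 d : R.Dart) :
    (R.stepPerm T).SameCycle d0 d := by
  have hreach : ∀ u, R.ConnectsVia T (R.dtail d0) u →
      ∃ g, (R.stepPerm T).SameCycle d0 g ∧ R.dtail g = u := by
    intro u hu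
    induction hu with
    | refl => exact ⟨d0, .refl _ _, rfl⟩
    | tail _ hbc ih =>
      obtain ⟨g, hg, hgb⟩ := ih
      obtain ⟨f, hfT, hends⟩ := hbc
      obtain ⟨x, rfl, hxb, hxc⟩ := Multigraph.exists_dart_of_ends hends
      have hx : (R.stepPerm T).SameCycle d0 x := sameCycle_of_dtail_eq hT hg (hgb.trans hxb.symm)
      exact ⟨(x.1, !x.2), (sameCycle_stepPerm_flip_iff hT hfT d0 x.2).2 hx,
        by rw [Multigraph.dtail_flip, hxc]⟩
  obtain ⟨g, hg, hgd⟩ := hreach (R.dtail d) (hT.1 _ _)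
  exact sameCycle_of_dtail_eq hT hg hgd

theorem isTBreak_bernardiDiv (T : Finset R.E) (d0 : R.Dart)
    (h : ∀ e, ∃ i, (R.bernardiTour T d0 i).1 = e) :
    R.IsTBreak T (R.bernardiDiv T d0) := by
  classical
  refine ⟨fun e => R.dtail (R.bernardiTour T d0 (Nat.find (h e))), fun e _ => ?_, fun v => ?_⟩
  · have hfirst := Multigraph.dtail_or (R.bernardiTour T d0 (Nat.find (h e)))
    rwa [Nat.find_spec (h e)] at hfirst
  · unfold bernardiDiv
    congr 2
    ext e
    simp only [Finset.mem_filter, Finset.mem_univ, true_and]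
    refine and_congr_right fun _ => ⟨fun ⟨i, hi, hv, hmin⟩ => ?_, fun hv => ?_⟩
    · rwa [(Nat.find_eq_iff (h e)).2 ⟨hi, hmin⟩]
    · exact ⟨_, Nat.find_spec (h e), hv, fun j hj => Nat.find_min (h e) hj⟩

end

theorem bernardi_tour_covers_and_tbreak_general (R : RibbonGraph)
    (T : Finset R.toMultigraph.E) (hT : R.toMultigraph.IsSpanningTree T)
    (d0 : R.toMultigraph.Dart) :
    (∀ d : R.toMultigraph.Dart,
      ∃! i : Fin (2 * Fintype.card R.toMultigraph.E),
        R.bernardiTour T d0 i = d) ∧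
    R.toMultigraph.IsTBreak T (R.bernardiDiv T d0) := by
  have hcard : Fintype.card R.Dart = 2 * Fintype.card R.E := by
    simp only [Fintype.card_prod, Fintype.card_bool, mul_comm]
  have hbij : Function.Bijective fun i : Fin (2 * Fintype.card R.E) => R.bernardiTour T d0 i := by
    rw [← hcard]
    simp only [bernardiTour_eq_pow_apply]
    exact Equiv.Perm.bijective_pow_apply_of_forall_sameCycle (sameCycle_stepPerm hT) d0
  refine ⟨hbij.existsUnique, isTBreak_bernardiDiv T d0 fun e => ?_⟩
  obtain ⟨i, hi⟩ := hbij.2 (e, true)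
  exact ⟨i, congrArg Prod.fst hi⟩

/-- for any spanning tree `T` and initial dart `d0` (at the vertex
`v`, along the edge `e`), the Bernardi tour hits every dart exactly once in its
first `2·#E` steps — i.e. it traverses each tree edge exactly twice (once in
each direction) and cuts through each non-tree edge exactly twice — and the
associated divisor `β_{(v,e)}(T)` is a `T`-break divisor. -/
theorem bernardi_tour_covers_and_tbreak (R : RibbonGraph)
    (hG : R.toMultigraph.Connected) (hl : R.toMultigraph.Loopless)
    (T : Finset R.toMultigraph.E) (hT : R.toMultigraph.IsSpanningTree T)
    (d0 : R.toMultigraph.Dart) :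
    (∀ d : R.toMultigraph.Dart,
      ∃! i : Fin (2 * Fintype.card R.toMultigraph.E),
        R.bernardiTour T d0 i = d) ∧
    R.toMultigraph.IsTBreak T (R.bernardiDiv T d0) :=
  bernardi_tour_covers_and_tbreak_general R T hT d0

end RibbonGraph
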